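/- arXiv:1206.1956 — 3 statements merged into one kernel-verified Lean document; each statement's English description precedes it below -/
import Mathlib

section
/- With λ, ζ, ρ, σ as above: for κ ∈ (0, 8(2−√3)), the solution β̂_κ ∈ (0,1) of φ(β) = σ(κ,β) is strictly increasing and continuous in κ, with β̂_κ → 0 as κ → 0+ and β̂_κ → 1 as κ → 8(2−√3)−. Moreover, if β > β̂_κ then σ(κ,β) > φ(β). -/
open Filter Topology

noncomputable def lamSLE (κ β : ℝ) : ℝ := 1 + 2 / κ + β * (2 + β) * κ / (8 * (1 + β) ^ 2)

noncomputable def zetaSLE (κ β : ℝ) : ℝ := 2 / κ - β ^ 2 * κ / (8 * (1 + β) ^ 2)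

noncomputable def rhoSLE (κ β : ℝ) : ℝ := lamSLE κ β * β + zetaSLE κ β

noncomputable def sigmaSLE (κ β : ℝ) : ℝ := min (lamSLE κ β * β) (rhoSLE κ β - 2)

noncomputable def phiSLE (β : ℝ) : ℝ := Real.sqrt ((1 + β) / 2)

/-! ### Auxiliary lemmas -/

lemma sqrt3_sq : Real.sqrt 3 ^ 2 = 3 := Real.sq_sqrt (by norm_num)

lemma sqrt3_lt : Real.sqrt 3 < 7/4 := by
  nlinarith [sqrt3_sq, Real.sqrt_nonneg 3]

lemma sqrt3_gt : (27:ℝ)/16 < Real.sqrt 3 := by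
  nlinarith [sqrt3_sq, Real.sqrt_nonneg 3]

lemma K_pos : (0:ℝ) < 8 * (2 - Real.sqrt 3) := by nlinarith [sqrt3_lt]

lemma K_le : 8 * (2 - Real.sqrt 3) ≤ 5/2 := by nlinarith [sqrt3_gt]

lemma id1 (κ β : ℝ) : lamSLE κ β * β = β + 2*β/κ + κ*(β^2*(2+β))/(8*(1+β)^2) := by
  unfold lamSLE; ring

lemma id2 {κ β : ℝ} (hκ : κ ≠ 0) (hβ : (1:ℝ) + β ≠ 0) :
    rhoSLE κ β - 2 = β + (2+2*β)/κ - 2 + κ*β^2/(8*(1+β)) := by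
  unfold rhoSLE lamSLE zetaSLE; field_simp; ring

lemma phi_half {b : ℝ} (hb : 0 ≤ b) : 1/2 ≤ phiSLE b := by
  unfold phiSLE
  rw [show (1:ℝ)/2 = Real.sqrt (1/4) by
    rw [show (1:ℝ)/4 = (1/2)^2 by norm_num, Real.sqrt_sq]; norm_num]
  exact Real.sqrt_le_sqrt (by linarith)

lemma phi_sq {b : ℝ} (hb : -1 ≤ b) : phiSLE b ^ 2 = (1+b)/2 :=
  Real.sq_sqrt (by linarith)

lemma phi_diff {b1 b2 : ℝ} (h1 : 0 ≤ b1) (h : b1 ≤ b2) :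
    phiSLE b2 ≤ phiSLE b1 + (b2 - b1) := by
  have hh := phi_half h1
  have hsq := phi_sq (by linarith : (-1:ℝ) ≤ b1)
  have key : (1+b2)/2 ≤ (phiSLE b1 + (b2 - b1))^2 := by nlinarith
  calc phiSLE b2 ≤ Real.sqrt ((phiSLE b1 + (b2 - b1))^2) := Real.sqrt_le_sqrt key
    _ = phiSLE b1 + (b2 - b1) := Real.sqrt_sq (by linarith)

/-- Strict monotonicity of `σ(κ,·) − φ` in `β` on `[0,1]`. -/
lemma F_mono {κ b1 b2 : ℝ} (hκ : 0 < κ) (h1 : 0 ≤ b1) (h12 : b1 < b2) (h2 : b2 ≤ 1) :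
    sigmaSLE κ b1 - phiSLE b1 < sigmaSLE κ b2 - phiSLE b2 := by
  have e1 : (0:ℝ) < 1 + b1 := by linarith
  have e2 : (0:ℝ) < 1 + b2 := by linarith
  have hκ' : κ ≠ 0 := ne_of_gt hκ
  have hg1 : lamSLE κ b1 * b1 + (b2 - b1) + 2/κ*(b2-b1) ≤ lamSLE κ b2 * b2 := by
    rw [id1, id1]
    have hA : κ*(b1^2*(2+b1))/(8*(1+b1)^2) ≤ κ*(b2^2*(2+b2))/(8*(1+b2)^2) := by
      rw [div_le_div_iff₀ (by positivity) (by positivity)]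
      have hb2 : 0 ≤ b2 := by linarith
      have hd : 0 ≤ b2 - b1 := by linarith
      have poly : b1^2*(2+b1)*(1+b2)^2 ≤ b2^2*(2+b2)*(1+b1)^2 := by
        nlinarith [mul_nonneg hd (add_nonneg h1 hb2),
          mul_nonneg hd (by nlinarith [mul_nonneg h1 hb2] : (0:ℝ) ≤ b2^2+b1*b2+b1^2),
          mul_nonneg (mul_nonneg (mul_nonneg h1 hb2) hd) (by linarith : (0:ℝ) ≤ b2+b1),
          mul_nonneg (mul_nonneg h1 hb2) hd,
          mul_nonneg (mul_nonneg (mul_nonneg (mul_nonneg h1 h1) hb2) hb2) hd]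
      nlinarith [mul_le_mul_of_nonneg_left poly hκ.le]
    have hB : 2*b1/κ + 2/κ*(b2-b1) = 2*b2/κ := by field_simp; ring
    linarith
  have hg2 : (rhoSLE κ b1 - 2) + (b2 - b1) + 2/κ*(b2-b1) ≤ rhoSLE κ b2 - 2 := by
    rw [id2 hκ' (ne_of_gt e1), id2 hκ' (ne_of_gt e2)]
    have hA : κ*b1^2/(8*(1+b1)) ≤ κ*b2^2/(8*(1+b2)) := by
      rw [div_le_div_iff₀ (by positivity) (by positivity)]
      have hb2 : 0 ≤ b2 := by linarith
      have poly : b1^2*(1+b2) ≤ b2^2*(1+b1) := by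
        nlinarith [mul_nonneg (mul_nonneg h1 hb2) (by linarith : (0:ℝ) ≤ b2 - b1),
          mul_nonneg (by linarith : (0:ℝ) ≤ b2-b1) (by linarith : (0:ℝ) ≤ b2+b1)]
      nlinarith [mul_le_mul_of_nonneg_left poly hκ.le]
    have hB : (2+2*b1)/κ + 2/κ*(b2-b1) = (2+2*b2)/κ := by field_simp; ring
    linarith
  have hd : 0 < 2/κ*(b2-b1) := mul_pos (by positivity) (by linarith)
  have hphi := phi_diff h1 (le_of_lt h12)
  have hmin : sigmaSLE κ b1 + (b2 - b1) + 2/κ*(b2-b1) ≤ sigmaSLE κ b2 := by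
    refine le_min ?_ ?_
    · have := min_le_left (lamSLE κ b1 * b1) (rhoSLE κ b1 - 2)
      unfold sigmaSLE at *; linarith
    · have := min_le_right (lamSLE κ b1 * b1) (rhoSLE κ b1 - 2)
      unfold sigmaSLE at *; linarith
  linarith

/-- Strict antitonicity of `σ(·,β)` in `κ`. -/
lemma F_anti {κ1 κ2 β : ℝ} (h1 : 0 < κ1) (h12 : κ1 < κ2) (h8 : κ1*κ2 < 8)
    (hb : 0 < β) (hb1 : β ≤ 1) : sigmaSLE κ2 β < sigmaSLE κ1 β := by
  have e1 : (0:ℝ) < 1 + β := by linarith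
  have h2 : (0:ℝ) < κ2 := lt_trans h1 h12
  have hdpos : (0:ℝ) < κ2 - κ1 := by linarith
  have hg1 : lamSLE κ2 β * β < lamSLE κ1 β * β := by
    rw [id1, id1]
    have key : (κ2-κ1)*(β^2*(2+β))/(8*(1+β)^2) < 2*β*(κ2-κ1)/(κ1*κ2) := by
      rw [div_lt_div_iff₀ (by positivity) (by positivity)]
      have h16 : κ1*κ2*(β*(2+β)) < 16*(1+β)^2 := by
        nlinarith [mul_lt_mul_of_pos_right h8 (show (0:ℝ) < β*(2+β) by positivity)]
      nlinarith [mul_lt_mul_of_pos_left h16 (mul_pos hdpos hb)]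
    have hL : κ2*(β^2*(2+β))/(8*(1+β)^2) - κ1*(β^2*(2+β))/(8*(1+β)^2)
        = (κ2-κ1)*(β^2*(2+β))/(8*(1+β)^2) := by ring
    have hR : 2*β/κ1 - 2*β/κ2 = 2*β*(κ2-κ1)/(κ1*κ2) := by field_simp
    linarith
  have hg2 : rhoSLE κ2 β - 2 < rhoSLE κ1 β - 2 := by
    rw [id2 (ne_of_gt h1) (ne_of_gt e1), id2 (ne_of_gt h2) (ne_of_gt e1)]
    have key : (κ2-κ1)*β^2/(8*(1+β)) < (2+2*β)*(κ2-κ1)/(κ1*κ2) := by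
      rw [div_lt_div_iff₀ (by positivity) (by positivity)]
      have h16 : κ1*κ2*β^2 < 16*(1+β)^2 := by
        nlinarith [mul_lt_mul_of_pos_right h8 (show (0:ℝ) < β^2 by positivity)]
      nlinarith [mul_lt_mul_of_pos_left h16 hdpos]
    have hL : κ2*β^2/(8*(1+β)) - κ1*β^2/(8*(1+β)) = (κ2-κ1)*β^2/(8*(1+β)) := by ring
    have hR : (2+2*β)/κ1 - (2+2*β)/κ2 = (2+2*β)*(κ2-κ1)/(κ1*κ2) := by field_simp
    linarith
  exact min_lt_min hg1 hg2

lemma phi_one : phiSLE 1 = 1 := by unfold phiSLE; norm_num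

lemma F_zero_neg {κ : ℝ} (hκ : 0 < κ) : sigmaSLE κ 0 - phiSLE 0 < 0 := by
  have h1 : sigmaSLE κ 0 ≤ lamSLE κ 0 * 0 := min_le_left _ _
  have h2 : (0:ℝ) < phiSLE 0 := Real.sqrt_pos.2 (by norm_num)
  nlinarith

lemma F_one_pos {κ : ℝ} (h0 : 0 < κ) (hK : κ < 8*(2 - Real.sqrt 3)) :
    0 < sigmaSLE κ 1 - phiSLE 1 := by
  rw [phi_one]
  have hg1 : (1:ℝ) < lamSLE κ 1 * 1 := by
    unfold lamSLE
    have : 0 < 2/κ := by positivity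
    have : 0 < 1*(2+1)*κ/(8*(1+1)^2) := by positivity
    linarith
  have hquad : 0 < κ^2 - 32*κ + 64 := by
    nlinarith [sqrt3_sq, Real.sqrt_nonneg 3]
  have hg2 : (1:ℝ) < rhoSLE κ 1 - 2 := by
    rw [id2 (ne_of_gt h0) (by norm_num)]
    have he : (1:ℝ) + (2+2*1)/κ - 2 + κ*1^2/(8*(1+1)) - 1 = (κ^2 - 32*κ + 64)/(16*κ) := by
      field_simp; ring
    have : 0 < (κ^2 - 32*κ + 64)/(16*κ) := div_pos hquad (by positivity)
    linarith
  exact sub_pos.2 (lt_min hg1 hg2)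

lemma F_K_one : sigmaSLE (8*(2 - Real.sqrt 3)) 1 - phiSLE 1 = 0 := by
  set K := 8*(2 - Real.sqrt 3) with hKdef
  have hK0 : 0 < K := K_pos
  have hquad : K^2 - 32*K + 64 = 0 := by
    rw [hKdef]; linear_combination 64 * sqrt3_sq
  have hg2 : rhoSLE K 1 - 2 = 1 := by
    rw [id2 (ne_of_gt hK0) (by norm_num)]
    have he : (1:ℝ) + (2+2*1)/K - 2 + K*1^2/(8*(1+1)) - 1 = (K^2 - 32*K + 64)/(16*K) := by
      field_simp; ring
    rw [hquad] at he
    simp at he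
    linarith
  have hg1 : (1:ℝ) ≤ lamSLE K 1 * 1 := by
    unfold lamSLE
    have : 0 < 2/K := by positivity
    have : 0 < 1*(2+1)*K/(8*(1+1)^2) := by positivity
    linarith
  unfold sigmaSLE
  rw [hg2, min_eq_right hg1, phi_one]
  ring

lemma F_small {κ a : ℝ} (hκ : 0 < κ) (hκa : κ < 2*a) (hκ3 : κ < 2/3)
    (ha : 0 < a) (ha1 : a < 1) : 0 < sigmaSLE κ a - phiSLE a := by
  have ea : (0:ℝ) < 1 + a := by linarith
  have hphi : phiSLE a < 1 := by
    unfold phiSLE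
    calc Real.sqrt ((1+a)/2) < Real.sqrt 1 := Real.sqrt_lt_sqrt (by positivity) (by linarith)
      _ = 1 := Real.sqrt_one
  have hg1 : (1:ℝ) < lamSLE κ a * a := by
    rw [id1]
    have h1 : 1 < 2*a/κ := by rw [lt_div_iff₀ hκ]; linarith
    have h2 : 0 ≤ κ*(a^2*(2+a))/(8*(1+a)^2) := by positivity
    linarith
  have hg2 : (1:ℝ) < rhoSLE κ a - 2 := by
    rw [id2 (ne_of_gt hκ) (ne_of_gt ea)]
    have h1 : 3 < 2/κ := by rw [lt_div_iff₀ hκ]; linarith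
    have h2 : 2/κ ≤ (2+2*a)/κ := by gcongr; linarith
    have h3 : 0 ≤ κ*a^2/(8*(1+a)) := by positivity
    linarith
  have : (1:ℝ) < sigmaSLE κ a := lt_min hg1 hg2
  linarith

lemma contF_beta {κ : ℝ} (hκ : κ ≠ 0) :
    ContinuousOn (fun b => sigmaSLE κ b - phiSLE b) (Set.Icc 0 1) := by
  have hden : ∀ b ∈ Set.Icc (0:ℝ) 1, (8*(1+b)^2 : ℝ) ≠ 0 := by
    intro b hb; have := hb.1; positivity
  have clam : ContinuousOn (fun b => lamSLE κ b) (Set.Icc 0 1) := by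
    unfold lamSLE
    exact (continuousOn_const.add continuousOn_const).add
      (ContinuousOn.div (by fun_prop) (by fun_prop) hden)
  have czeta : ContinuousOn (fun b => zetaSLE κ b) (Set.Icc 0 1) := by
    unfold zetaSLE
    exact continuousOn_const.sub (ContinuousOn.div (by fun_prop) (by fun_prop) hden)
  have cg1 : ContinuousOn (fun b => lamSLE κ b * b) (Set.Icc 0 1) :=
    clam.mul continuousOn_id
  have cg2 : ContinuousOn (fun b => rhoSLE κ b - 2) (Set.Icc 0 1) := by
    unfold rhoSLE; exact (cg1.add czeta).sub continuousOn_const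
  have cphi : ContinuousOn (fun b : ℝ => phiSLE b) (Set.Icc 0 1) := by
    unfold phiSLE
    exact (Real.continuous_sqrt.comp (by fun_prop)).continuousOn
  exact (cg1.inf cg2).sub cphi

lemma contF_kappa {κ0 b : ℝ} (hκ0 : κ0 ≠ 0) (hb : 0 ≤ b) :
    ContinuousAt (fun κ => sigmaSLE κ b - phiSLE b) κ0 := by
  have hden : (8*(1+b)^2 : ℝ) ≠ 0 := by positivity
  have cinv : ContinuousAt (fun κ : ℝ => 2/κ) κ0 :=
    ContinuousAt.div continuousAt_const continuousAt_id hκ0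
  have clam : ContinuousAt (fun κ => lamSLE κ b) κ0 := by
    unfold lamSLE
    exact (continuousAt_const.add cinv).add
      (ContinuousAt.div (by fun_prop) continuousAt_const hden)
  have czeta : ContinuousAt (fun κ => zetaSLE κ b) κ0 := by
    unfold zetaSLE
    exact cinv.sub (ContinuousAt.div (by fun_prop) continuousAt_const hden)
  have cg1 : ContinuousAt (fun κ => lamSLE κ b * b) κ0 := clam.mul continuousAt_const
  have cg2 : ContinuousAt (fun κ => rhoSLE κ b - 2) κ0 := by
    unfold rhoSLE; exact (cg1.add czeta).sub continuousAt_const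
  exact (cg1.inf cg2).sub continuousAt_const

lemma root_exists {κ : ℝ} (h0 : 0 < κ) (hK : κ < 8*(2 - Real.sqrt 3)) :
    ∃ b ∈ Set.Ioo (0:ℝ) 1, sigmaSLE κ b - phiSLE b = 0 := by
  have h := intermediate_value_Ioo (by norm_num : (0:ℝ) ≤ 1) (contF_beta (ne_of_gt h0))
  have hmem : (0:ℝ) ∈ Set.Ioo (sigmaSLE κ 0 - phiSLE 0) (sigmaSLE κ 1 - phiSLE 1) :=
    ⟨F_zero_neg h0, F_one_pos h0 hK⟩
  obtain ⟨b, hb, hfb⟩ := h hmem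
  exact ⟨b, hb, hfb⟩

open Classical in
noncomputable def bhatSLE (κ : ℝ) : ℝ :=
  if h : ∃ b ∈ Set.Ioo (0:ℝ) 1, sigmaSLE κ b - phiSLE b = 0 then h.choose else 1/2

lemma bhat_spec {κ : ℝ} (h0 : 0 < κ) (hK : κ < 8*(2 - Real.sqrt 3)) :
    bhatSLE κ ∈ Set.Ioo (0:ℝ) 1 ∧
      sigmaSLE κ (bhatSLE κ) - phiSLE (bhatSLE κ) = 0 := by
  have h := root_exists h0 hK
  simp only [bhatSLE, dif_pos h]
  exact ⟨h.choose_spec.1, h.choose_spec.2⟩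

lemma lt_bhat {κ b : ℝ} (h0 : 0 < κ) (hK : κ < 8*(2 - Real.sqrt 3)) (hb0 : 0 ≤ b)
    (hb1 : b ≤ 1) (hneg : sigmaSLE κ b - phiSLE b < 0) : b < bhatSLE κ := by
  obtain ⟨⟨hb0', hb1'⟩, hroot⟩ := bhat_spec h0 hK
  by_contra hcon
  push_neg at hcon
  rcases eq_or_lt_of_le hcon with he | hl
  · rw [he] at hroot; linarith
  · have := F_mono h0 (le_of_lt hb0') hl hb1; linarith

lemma bhat_lt {κ b : ℝ} (h0 : 0 < κ) (hK : κ < 8*(2 - Real.sqrt 3)) (hb0 : 0 ≤ b)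
    (hb1 : b ≤ 1) (hpos : 0 < sigmaSLE κ b - phiSLE b) : bhatSLE κ < b := by
  obtain ⟨⟨hb0', hb1'⟩, hroot⟩ := bhat_spec h0 hK
  by_contra hcon
  push_neg at hcon
  rcases eq_or_lt_of_le hcon with he | hl
  · rw [← he] at hroot; linarith
  · have := F_mono h0 hb0 hl (le_of_lt hb1'); linarith

/-- For `κ ∈ (0, 8(2−√3))` the solution `β̂_κ ∈ (0,1)` of `φ(β) = σ(κ,β)` depends
continuously and strictly monotonically on `κ`, tends to `0` as `κ → 0+` and to `1`
as `κ → 8(2−√3)−`; moreover `β > β̂_κ` (with `β < 1`) implies `σ(κ,β) > φ(β)`. -/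
theorem stmt_10 :
    ∃ bhat : ℝ → ℝ,
      (∀ κ ∈ Set.Ioo (0 : ℝ) (8 * (2 - Real.sqrt 3)),
        bhat κ ∈ Set.Ioo (0 : ℝ) 1 ∧ phiSLE (bhat κ) = sigmaSLE κ (bhat κ)) ∧
      StrictMonoOn bhat (Set.Ioo (0 : ℝ) (8 * (2 - Real.sqrt 3))) ∧
      ContinuousOn bhat (Set.Ioo (0 : ℝ) (8 * (2 - Real.sqrt 3))) ∧
      Tendsto bhat (nhdsWithin 0 (Set.Ioi (0 : ℝ))) (nhds 0) ∧
      Tendsto bhat (nhdsWithin (8 * (2 - Real.sqrt 3)) (Set.Iio (8 * (2 - Real.sqrt 3))))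
        (nhds 1) ∧
      (∀ κ ∈ Set.Ioo (0 : ℝ) (8 * (2 - Real.sqrt 3)), ∀ β : ℝ,
        bhat κ < β → β < 1 → phiSLE β < sigmaSLE κ β) := by
  refine ⟨bhatSLE, ?_, ?_, ?_, ?_, ?_, ?_⟩
  · -- root property
    intro κ hκ
    obtain ⟨hmem, hroot⟩ := bhat_spec hκ.1 hκ.2
    exact ⟨hmem, by linarith⟩
  · -- strict monotone
    intro κ1 h1 κ2 h2 h12
    have hk1 : κ1 < 5/2 := lt_of_lt_of_le h1.2 K_le
    have hk2 : κ2 < 5/2 := lt_of_lt_of_le h2.2 K_le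
    have h8 : κ1*κ2 < 8 := by nlinarith [h1.1, h2.1]
    obtain ⟨⟨s10, s11⟩, s1r⟩ := bhat_spec h1.1 h1.2
    obtain ⟨⟨s20, s21⟩, s2r⟩ := bhat_spec h2.1 h2.2
    have hanti := F_anti h1.1 h12 h8 s10 (le_of_lt s11)
    exact lt_bhat h2.1 h2.2 (le_of_lt s10) (le_of_lt s11) (by linarith)
  · -- continuity
    intro κ0 hκ0
    obtain ⟨⟨hb0, hb1⟩, hroot⟩ := bhat_spec hκ0.1 hκ0.2
    have hmem : Set.Ioo (0:ℝ) (8*(2 - Real.sqrt 3)) ∈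
        𝓝[Set.Ioo (0:ℝ) (8*(2 - Real.sqrt 3))] κ0 := self_mem_nhdsWithin
    apply tendsto_order.2
    constructor
    · intro a ha
      rcases le_or_gt a 0 with h | h
      · filter_upwards [hmem] with κ hκ
        exact lt_of_le_of_lt h (bhat_spec hκ.1 hκ.2).1.1
      · have hFa : sigmaSLE κ0 a - phiSLE a < 0 := by
          have := F_mono hκ0.1 h.le ha hb1.le; linarith
        have hc := contF_kappa (ne_of_gt hκ0.1) h.le
        have hev := hc.eventually_lt_const hFa
        filter_upwards [hmem, nhdsWithin_le_nhds hev] with κ hκs hκneg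
        exact lt_bhat hκs.1 hκs.2 h.le (by linarith) hκneg
    · intro a ha
      rcases le_or_gt 1 a with h | h
      · filter_upwards [hmem] with κ hκ
        exact lt_of_lt_of_le (bhat_spec hκ.1 hκ.2).1.2 h
      · have hFa : 0 < sigmaSLE κ0 a - phiSLE a := by
          have := F_mono hκ0.1 hb0.le ha h.le; linarith
        have hc := contF_kappa (ne_of_gt hκ0.1) (le_of_lt (lt_trans hb0 ha))
        have hev := hc.eventually_const_lt hFa
        filter_upwards [hmem, nhdsWithin_le_nhds hev] with κ hκs hκpos
        exact bhat_lt hκs.1 hκs.2 (le_of_lt (lt_trans hb0 ha)) h.le hκpos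
  · -- limit at 0+
    have hm : Set.Ioo (0:ℝ) (8*(2 - Real.sqrt 3)) ∈ 𝓝[>] (0:ℝ) :=
      Ioo_mem_nhdsGT_of_mem ⟨le_refl 0, K_pos⟩
    apply tendsto_order.2
    constructor
    · intro a ha
      filter_upwards [hm] with κ hκ
      exact lt_trans ha (bhat_spec hκ.1 hκ.2).1.1
    · intro a ha
      rcases le_or_gt 1 a with h | h
      · filter_upwards [hm] with κ hκ
        exact lt_of_lt_of_le (bhat_spec hκ.1 hκ.2).1.2 h
      · have hδ : (0:ℝ) < min (min (2*a) (2/3)) (8*(2 - Real.sqrt 3)) := by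
          refine lt_min (lt_min (by linarith) (by norm_num)) K_pos
        have hm2 : Set.Ioo (0:ℝ) (min (min (2*a) (2/3)) (8*(2 - Real.sqrt 3))) ∈
            𝓝[>] (0:ℝ) := Ioo_mem_nhdsGT_of_mem ⟨le_refl 0, hδ⟩
        filter_upwards [hm2] with κ hκ
        have hκK : κ < 8*(2 - Real.sqrt 3) := lt_of_lt_of_le hκ.2 (min_le_right _ _)
        have hκa : κ < 2*a :=
          lt_of_lt_of_le hκ.2 (le_trans (min_le_left _ _) (min_le_left _ _))
        have hκ3 : κ < 2/3 :=
          lt_of_lt_of_le hκ.2 (le_trans (min_le_left _ _) (min_le_right _ _))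
        exact bhat_lt hκ.1 hκK ha.le h.le (F_small hκ.1 hκa hκ3 ha h)
  · -- limit at K−
    have hm : Set.Ioo (0:ℝ) (8*(2 - Real.sqrt 3)) ∈ 𝓝[<] (8*(2 - Real.sqrt 3)) :=
      Ioo_mem_nhdsLT_of_mem ⟨K_pos, le_refl _⟩
    apply tendsto_order.2
    constructor
    · intro a ha
      rcases le_or_gt a 0 with h | h
      · filter_upwards [hm] with κ hκ
        exact lt_of_le_of_lt h (bhat_spec hκ.1 hκ.2).1.1
      · have hFa : sigmaSLE (8*(2 - Real.sqrt 3)) a - phiSLE a < 0 := by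
          have := F_mono K_pos h.le ha (le_refl 1)
          have hk1 := F_K_one
          linarith
        have hc := contF_kappa (ne_of_gt K_pos) h.le
        have hev := hc.eventually_lt_const hFa
        filter_upwards [hm, nhdsWithin_le_nhds hev] with κ hκs hκneg
        exact lt_bhat hκs.1 hκs.2 h.le ha.le hκneg
    · intro a ha
      filter_upwards [hm] with κ hκ
      exact lt_trans (bhat_spec hκ.1 hκ.2).1.2 ha
  · -- strict inequality beyond the root
    intro κ hκ β h1 h2
    obtain ⟨⟨hb0, hb1⟩, hroot⟩ := bhat_spec hκ.1 hκ.2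
    have := F_mono hκ.1 (le_of_lt hb0) h1 (le_of_lt h2)
    linarith
end

section
/- For κ ∈ (0,∞) and β ∈ (0,1), with ρ(κ,β) = (1 + 2/κ + β(2+β)κ/(8(1+β)²))·β + 2/κ − β²κ/(8(1+β)²), the value κ = 8(2−√3) is the smallest κ > 0 at which min{λβ, ρ−2} = 1 has a solution with β → 1, i.e., ρ(8(2−√3), 1) = 3. -/
/-! At `β = 1` one has `ρ(κ, 1) = 1 + 4/κ + κ/16`, so `16κ (ρ(κ, 1) - 3) = κ² - 32κ + 64`,
whose roots are `8(2 ± √3)`. Below the smaller root both factors are negative. -/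

open Real

lemma rhoSLE_one {κ : ℝ} (hκ : κ ≠ 0) : rhoSLE κ 1 = 1 + 4 / κ + κ / 16 := by
  simp only [rhoSLE, lamSLE, zetaSLE]
  field_simp
  ring

lemma rhoSLE_one_sub_three {κ : ℝ} (hκ : κ ≠ 0) :
    rhoSLE κ 1 - 3 = (κ - 8 * (2 - √3)) * (κ - 8 * (2 + √3)) / (16 * κ) := by
  have hsq : √3 ^ 2 = 3 := sq_sqrt (by norm_num)
  rw [rhoSLE_one hκ]
  field_simp
  linear_combination 64 * hsq

lemma sqrt_three_lt_two : √3 < 2 := by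
  rw [sqrt_lt' two_pos]
  norm_num

/-- `ρ(8(2−√3), 1) = 3`, and `8(2−√3)` is the smallest positive `κ` with this
property: for `0 < κ < 8(2−√3)` one has `ρ(κ,1) > 3`. -/
theorem stmt_11 :
    rhoSLE (8 * (2 - Real.sqrt 3)) 1 = 3 ∧
      ∀ κ : ℝ, 0 < κ → κ < 8 * (2 - Real.sqrt 3) → 3 < rhoSLE κ 1 := by
  have hroot : 0 < 8 * (2 - √3) := by linarith [sqrt_three_lt_two]
  constructor
  · have h := rhoSLE_one_sub_three hroot.ne'
    rw [sub_self, zero_mul, zero_div] at h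
    linarith
  · intro κ hκ hκlt
    have hfactor : 0 < (κ - 8 * (2 - √3)) * (κ - 8 * (2 + √3)) / (16 * κ) := by
      refine div_pos (mul_pos_of_neg_of_neg ?_ ?_) (by positivity)
      · linarith
      · linarith [sqrt_nonneg 3]
    linarith [rhoSLE_one_sub_three hκ.ne']
end

section
/- Let F : [0,1] × (0,1] → ℂ, c < ∞, δ > 0, and suppose: (i) for all t and dyadic scales n, the oscillation of F over any 'box' [j2^{-2n},(j+1)2^{-2n}] × [2^{-n}, 2^{-(n-1)}] is at most c 2^{-nδ}. Then the boundary function γ(t) = lim_{y→0+} F(t,y) exists and is Hölder continuous with exponent δ/2: |γ(t₁) − γ(t₂)| ≤ c' |t₁−t₂|^{δ/2} for a constant c' depending only on c and δ. -/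
/-!
Along a vertical line, consecutive dyadic heights `2^{-m}` and `2^{-(m+1)}` lie in a common box, so
`F (t, 2^{-m})` is Cauchy with geometrically decaying increments; its limit `γ t` satisfies
`‖F (t, y) - γ t‖ ≲ y^δ`. If `|t₁ - t₂| ≈ 4^{-n}`, the points `(t₁, 2^{-n})` and `(t₂, 2^{-n})` are
joined through boundedly many boxes of row `n`, so
`‖γ t₁ - γ t₂‖ ≲ 2^{-nδ} ≈ |t₁ - t₂|^{δ/2}`.
-/

open Filter Topology Set

namespace ParabolicWhitney

noncomputable def width (n : ℕ) : ℝ := (2:ℝ) ^ (-(2 * (n:ℝ)))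

def tSide (n j : ℕ) : Set ℝ := Icc ((j : ℝ) * width n) (((j : ℝ) + 1) * width n)

def band (n : ℕ) : Set ℝ := Icc ((2:ℝ) ^ (-(n:ℝ))) ((2:ℝ) ^ (-((n:ℝ) - 1)))

lemma width_pos (n : ℕ) : 0 < width n := by
  unfold width; positivity

lemma width_eq_inv_pow (n : ℕ) : width n = ((4:ℝ) ^ n)⁻¹ := by
  rw [width, Real.rpow_neg zero_le_two, Real.rpow_mul zero_le_two, Real.rpow_natCast]
  norm_num

lemma two_rpow_neg_natCast (n : ℕ) : (2:ℝ) ^ (-(n:ℝ)) = ((2:ℝ) ^ n)⁻¹ := by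
  rw [Real.rpow_neg zero_le_two, Real.rpow_natCast]

lemma two_rpow_neg_lt_one {δ : ℝ} (hδ : 0 < δ) : (2:ℝ) ^ (-δ) < 1 :=
  Real.rpow_lt_one_of_one_lt_of_neg one_lt_two (neg_neg_of_pos hδ)

lemma two_rpow_neg_natCast_mul (n : ℕ) (δ : ℝ) :
    (2:ℝ) ^ (-(n:ℝ) * δ) = ((2:ℝ) ^ (-δ)) ^ n := by
  rw [← Real.rpow_natCast, ← Real.rpow_mul zero_le_two]
  ring_nf

lemma two_rpow_neg_natCast_mul_eq_width_rpow (n : ℕ) (δ : ℝ) :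
    (2:ℝ) ^ (-(n:ℝ) * δ) = width n ^ (δ / 2) := by
  rw [width, ← Real.rpow_mul zero_le_two]
  ring_nf

lemma mem_tSide_floor (n : ℕ) {t : ℝ} (ht : 0 ≤ t) : t ∈ tSide n ⌊t / width n⌋₊ := by
  have hW := width_pos n
  constructor
  · rw [← le_div_iff₀ hW]
    exact Nat.floor_le (div_nonneg ht hW.le)
  · rw [← div_le_iff₀ hW]
    exact (Nat.lt_floor_add_one _).le

lemma self_mem_band (n : ℕ) : (2:ℝ) ^ (-(n:ℝ)) ∈ band n :=
  ⟨le_rfl, Real.rpow_le_rpow_of_exponent_le one_le_two (by linarith)⟩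

lemma band_succ (m : ℕ) :
    band (m + 1) = Icc ((2:ℝ) ^ (-((m + 1 : ℕ) : ℝ))) ((2:ℝ) ^ (-(m:ℝ))) := by
  rw [band, show -(((m + 1 : ℕ) : ℝ) - 1) = -(m : ℝ) by push_cast; ring]

lemma mem_band_succ (m : ℕ) : (2:ℝ) ^ (-(m:ℝ)) ∈ band (m + 1) := by
  rw [band_succ]
  exact ⟨Real.rpow_le_rpow_of_exponent_le one_le_two (by push_cast; linarith), le_rfl⟩

lemma exists_mem_band {y : ℝ} (hy₀ : 0 < y) (hy₁ : y ≤ 1) : ∃ n, 1 ≤ n ∧ y ∈ band n := by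
  obtain ⟨m, hm, hm'⟩ := exists_nat_pow_near (one_le_inv_iff₀.2 ⟨hy₀, hy₁⟩) one_lt_two
  refine ⟨m + 1, le_add_self, ?_⟩
  rw [band_succ, two_rpow_neg_natCast, two_rpow_neg_natCast]
  exact ⟨(inv_le_comm₀ (by positivity) hy₀).2 hm'.le, (le_inv_comm₀ hy₀ (by positivity)).2 hm⟩

lemma exists_width_lt_le {d : ℝ} (hd₀ : 0 < d) (hd₁ : d ≤ 1) :
    ∃ n, 1 ≤ n ∧ width n < d ∧ d ≤ 4 * width n := by
  obtain ⟨m, hm, hm'⟩ := exists_nat_pow_near (one_le_inv_iff₀.2 ⟨hd₀, hd₁⟩)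
    (by norm_num : (1:ℝ) < 4)
  refine ⟨m + 1, le_add_self, ?_, ?_⟩
  · rw [width_eq_inv_pow]
    exact (inv_lt_comm₀ (by positivity) hd₀).2 hm'
  · rw [width_eq_inv_pow, pow_succ', mul_inv, mul_inv_cancel_left₀ four_ne_zero]
    exact (le_inv_comm₀ hd₀ (by positivity)).2 hm

variable {E : Type*} [NormedAddCommGroup E]

def OscBound (F : ℝ → ℝ → E) (c δ : ℝ) : Prop :=
  ∀ n : ℕ, 1 ≤ n → ∀ j : ℕ, ∀ t₁ ∈ tSide n j, ∀ t₂ ∈ tSide n j, ∀ y₁ ∈ band n, ∀ y₂ ∈ band n,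
    ‖F t₁ y₁ - F t₂ y₂‖ ≤ c * (2:ℝ) ^ (-(n:ℝ) * δ)

noncomputable def boundaryValue (F : ℝ → ℝ → E) (t : ℝ) : E :=
  limUnder atTop fun m : ℕ => F t ((2:ℝ) ^ (-(m:ℝ)))

namespace OscBound

variable {F : ℝ → ℝ → E} {c δ : ℝ}

lemma nonneg (hF : OscBound F c δ) : 0 ≤ c := by
  have h := hF 1 le_rfl _ 0 (mem_tSide_floor 1 le_rfl) 0 (mem_tSide_floor 1 le_rfl)
    _ (self_mem_band 1) _ (self_mem_band 1)
  exact nonneg_of_mul_nonneg_left ((norm_nonneg _).trans h) (by positivity)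

lemma norm_sub_le_of_mem_band (hF : OscBound F c δ) {n : ℕ} (hn : 1 ≤ n) {t y₁ y₂ : ℝ}
    (ht : 0 ≤ t) (hy₁ : y₁ ∈ band n) (hy₂ : y₂ ∈ band n) :
    ‖F t y₁ - F t y₂‖ ≤ c * (2:ℝ) ^ (-(n:ℝ) * δ) :=
  hF n hn _ t (mem_tSide_floor n ht) t (mem_tSide_floor n ht) y₁ hy₁ y₂ hy₂

lemma norm_sub_gridPoint_le (hF : OscBound F c δ) {n : ℕ} (hn : 1 ≤ n) {y : ℝ} (hy : y ∈ band n)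
    {k j : ℕ} {t : ℝ} (ht : t ∈ Icc ((j : ℝ) * width n) (((j : ℝ) + k + 1) * width n)) :
    ‖F t y - F (j * width n) y‖ ≤ (k + 1) * (c * (2:ℝ) ^ (-(n:ℝ) * δ)) := by
  have hW := width_pos n
  have hleft (i : ℕ) : (i : ℝ) * width n ∈ tSide n i := ⟨le_rfl, by linarith⟩
  induction k generalizing j t with
  | zero => simpa using hF n hn j t ⟨ht.1, by simpa using ht.2⟩ _ (hleft j) y hy y hy
  | succ k ih =>
    have hω : 0 ≤ c * (2:ℝ) ^ (-(n:ℝ) * δ) := mul_nonneg hF.nonneg (by positivity)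
    rcases le_or_gt t (((j : ℝ) + 1) * width n) with htj | htj
    · calc ‖F t y - F (j * width n) y‖ ≤ c * (2:ℝ) ^ (-(n:ℝ) * δ) :=
            hF n hn j t ⟨ht.1, htj⟩ _ (hleft j) y hy y hy
        _ ≤ _ := le_mul_of_one_le_left hω (by push_cast; linarith)
    · have h₁ : ‖F t y - F ((j + 1) * width n) y‖ ≤ (k + 1) * (c * (2:ℝ) ^ (-(n:ℝ) * δ)) := by
        simpa using ih (j := j + 1) ⟨by push_cast; linarith, by push_cast at ht ⊢; linarith [ht.2]⟩
      have h₂ := hF n hn j _ ⟨by linarith, le_rfl⟩ _ (hleft j) y hy y hy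
      calc ‖F t y - F (j * width n) y‖
          ≤ ‖F t y - F ((j + 1) * width n) y‖ + ‖F ((j + 1) * width n) y - F (j * width n) y‖ :=
            norm_sub_le_norm_sub_add_norm_sub ..
        _ ≤ _ := by push_cast; linarith

lemma norm_sub_le_of_abs_sub_le (hF : OscBound F c δ) {n : ℕ} (hn : 1 ≤ n) {y : ℝ}
    (hy : y ∈ band n) {k : ℕ} {t₁ t₂ : ℝ} (ht₁ : 0 ≤ t₁) (ht₂ : 0 ≤ t₂)
    (hd : |t₁ - t₂| ≤ k * width n) :
    ‖F t₁ y - F t₂ y‖ ≤ 2 * (k + 1) * (c * (2:ℝ) ^ (-(n:ℝ) * δ)) := by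
  wlog hle : t₁ ≤ t₂ generalizing t₁ t₂
  · rw [norm_sub_rev]
    exact this ht₂ ht₁ (by rwa [abs_sub_comm]) (le_of_not_ge hle)
  rw [abs_sub_comm, abs_of_nonneg (sub_nonneg.2 hle)] at hd
  set j := ⌊t₁ / width n⌋₊
  have hj := mem_tSide_floor n ht₁
  have h₁ := hF.norm_sub_gridPoint_le hn hy (k := k) (j := j)
    ⟨hj.1, by linarith [hj.2, width_pos n]⟩
  have h₂ := hF.norm_sub_gridPoint_le hn hy (k := k) (j := j)
    ⟨hj.1.trans hle, by linarith [hj.2]⟩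
  calc ‖F t₁ y - F t₂ y‖ ≤ ‖F t₁ y - F (j * width n) y‖ + ‖F (j * width n) y - F t₂ y‖ :=
        norm_sub_le_norm_sub_add_norm_sub ..
    _ ≤ _ := by rw [norm_sub_rev (F (j * width n) y)]; linarith

lemma dist_dyadic_succ_le (hF : OscBound F c δ) {t : ℝ} (ht : 0 ≤ t) (m : ℕ) :
    dist (F t ((2:ℝ) ^ (-(m:ℝ)))) (F t ((2:ℝ) ^ (-((m + 1 : ℕ) : ℝ)))) ≤
      c * (2:ℝ) ^ (-δ) * ((2:ℝ) ^ (-δ)) ^ m := by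
  rw [dist_eq_norm, mul_assoc, ← pow_succ', ← two_rpow_neg_natCast_mul]
  exact hF.norm_sub_le_of_mem_band le_add_self ht (mem_band_succ m) (self_mem_band _)

variable [CompleteSpace E]

lemma tendsto_boundaryValue_nat (hF : OscBound F c δ) (hδ : 0 < δ) {t : ℝ} (ht : 0 ≤ t) :
    Tendsto (fun m : ℕ => F t ((2:ℝ) ^ (-(m:ℝ)))) atTop (𝓝 (boundaryValue F t)) :=
  (cauchySeq_of_le_geometric _ _ (two_rpow_neg_lt_one hδ)
    (hF.dist_dyadic_succ_le ht)).tendsto_limUnder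

lemma norm_sub_boundaryValue_le (hF : OscBound F c δ) (hδ : 0 < δ) {t : ℝ} (ht : 0 ≤ t)
    {n : ℕ} (hn : 1 ≤ n) {y : ℝ} (hy : y ∈ band n) :
    ‖F t y - boundaryValue F t‖ ≤ c / (1 - (2:ℝ) ^ (-δ)) * (2:ℝ) ^ (-(n:ℝ) * δ) := by
  set r := (2:ℝ) ^ (-δ)
  have hr : 0 < 1 - r := sub_pos.2 (two_rpow_neg_lt_one hδ)
  have h₁ := hF.norm_sub_le_of_mem_band hn ht hy (self_mem_band n)
  have h₂ := dist_le_of_le_geometric_of_tendsto _ _ (two_rpow_neg_lt_one hδ)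
    (hF.dist_dyadic_succ_le ht) (hF.tendsto_boundaryValue_nat hδ ht) n
  rw [dist_eq_norm, mul_assoc, ← two_rpow_neg_natCast_mul] at h₂
  calc ‖F t y - boundaryValue F t‖
      ≤ ‖F t y - F t ((2:ℝ) ^ (-(n:ℝ)))‖ + ‖F t ((2:ℝ) ^ (-(n:ℝ))) - boundaryValue F t‖ :=
        norm_sub_le_norm_sub_add_norm_sub ..
    _ ≤ c * (2:ℝ) ^ (-(n:ℝ) * δ) + c * (r * (2:ℝ) ^ (-(n:ℝ) * δ)) / (1 - r) := add_le_add h₁ h₂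
    _ = _ := by field_simp; ring

lemma norm_sub_boundaryValue_le_rpow (hF : OscBound F c δ) (hδ : 0 < δ) {t : ℝ} (ht : 0 ≤ t)
    {y : ℝ} (hy₀ : 0 < y) (hy₁ : y ≤ 1) :
    ‖F t y - boundaryValue F t‖ ≤ c / (1 - (2:ℝ) ^ (-δ)) * y ^ δ := by
  obtain ⟨n, hn, hy⟩ := exists_mem_band hy₀ hy₁
  have hK : 0 ≤ c / (1 - (2:ℝ) ^ (-δ)) :=
    div_nonneg hF.nonneg (sub_nonneg.2 (two_rpow_neg_lt_one hδ).le)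
  calc ‖F t y - boundaryValue F t‖ ≤ c / (1 - (2:ℝ) ^ (-δ)) * (2:ℝ) ^ (-(n:ℝ) * δ) :=
        hF.norm_sub_boundaryValue_le hδ ht hn hy
    _ ≤ c / (1 - (2:ℝ) ^ (-δ)) * y ^ δ := by
        rw [Real.rpow_mul zero_le_two]
        gcongr
        exact hy.1

lemma tendsto_boundaryValue (hF : OscBound F c δ) (hδ : 0 < δ) {t : ℝ} (ht : 0 ≤ t) :
    Tendsto (F t) (𝓝[>] 0) (𝓝 (boundaryValue F t)) := by
  rw [tendsto_iff_norm_sub_tendsto_zero]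
  have hlim : Tendsto (fun y : ℝ => c / (1 - (2:ℝ) ^ (-δ)) * y ^ δ) (𝓝[>] 0) (𝓝 0) := by
    simpa [Real.zero_rpow hδ.ne'] using
      ((Real.continuousAt_rpow_const 0 δ (Or.inr hδ.le)).tendsto.mono_left
        nhdsWithin_le_nhds).const_mul (c / (1 - (2:ℝ) ^ (-δ)))
  refine squeeze_zero' (Eventually.of_forall fun _ => norm_nonneg _) ?_ hlim
  filter_upwards [Ioo_mem_nhdsGT zero_lt_one] with y hy
  exact hF.norm_sub_boundaryValue_le_rpow hδ ht hy.1 hy.2.le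

lemma norm_boundaryValue_sub_le (hF : OscBound F c δ) (hδ : 0 < δ) {t₁ t₂ : ℝ} (ht₁ : 0 ≤ t₁)
    (ht₂ : 0 ≤ t₂) (hd : |t₁ - t₂| ≤ 1) :
    ‖boundaryValue F t₁ - boundaryValue F t₂‖ ≤
      c * (2 / (1 - (2:ℝ) ^ (-δ)) + 10) * |t₁ - t₂| ^ (δ / 2) := by
  rcases (abs_nonneg (t₁ - t₂)).eq_or_lt with hd₀ | hd₀
  · rw [eq_comm, abs_eq_zero, sub_eq_zero] at hd₀
    subst hd₀
    simp [Real.zero_rpow (by positivity : δ / 2 ≠ 0)]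
  obtain ⟨n, hn, hW, hW'⟩ := exists_width_lt_le hd₀ hd
  have hs := self_mem_band n
  set s := (2:ℝ) ^ (-(n:ℝ))
  have h₁ := hF.norm_sub_boundaryValue_le hδ ht₁ hn hs
  have h₂ := hF.norm_sub_boundaryValue_le hδ ht₂ hn hs
  have h₃ := hF.norm_sub_le_of_abs_sub_le hn hs (k := 4) ht₁ ht₂ (by exact_mod_cast hW')
  have hK : 0 ≤ c * (2 / (1 - (2:ℝ) ^ (-δ)) + 10) := by
    have := sub_pos.2 (two_rpow_neg_lt_one hδ)
    have := hF.nonneg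
    positivity
  have hsplit : c * (2 / (1 - (2:ℝ) ^ (-δ)) + 10) * (2:ℝ) ^ (-(n:ℝ) * δ) =
      c / (1 - (2:ℝ) ^ (-δ)) * (2:ℝ) ^ (-(n:ℝ) * δ) + 2 * (4 + 1) * (c * (2:ℝ) ^ (-(n:ℝ) * δ)) +
        c / (1 - (2:ℝ) ^ (-δ)) * (2:ℝ) ^ (-(n:ℝ) * δ) := by ring
  rw [norm_sub_rev] at h₁
  calc ‖boundaryValue F t₁ - boundaryValue F t₂‖
      ≤ ‖boundaryValue F t₁ - F t₁ s‖ + ‖F t₁ s - boundaryValue F t₂‖ :=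
        norm_sub_le_norm_sub_add_norm_sub ..
    _ ≤ ‖boundaryValue F t₁ - F t₁ s‖ + (‖F t₁ s - F t₂ s‖ + ‖F t₂ s - boundaryValue F t₂‖) := by
        gcongr; exact norm_sub_le_norm_sub_add_norm_sub ..
    _ ≤ c * (2 / (1 - (2:ℝ) ^ (-δ)) + 10) * (2:ℝ) ^ (-(n:ℝ) * δ) := by
        push_cast at h₃; linarith
    _ ≤ c * (2 / (1 - (2:ℝ) ^ (-δ)) + 10) * |t₁ - t₂| ^ (δ / 2) := by
        rw [two_rpow_neg_natCast_mul_eq_width_rpow]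
        gcongr
        exact (width_pos n).le

end OscBound

end ParabolicWhitney

open ParabolicWhitney

theorem stmt_16_general (c δ : ℝ) (hδ : 0 < δ) :
    ∃ c' : ℝ, ∀ F : ℝ → ℝ → ℂ,
      (∀ n : ℕ, 1 ≤ n → ∀ j : ℕ,
        ∀ t₁ ∈ Set.Icc ((j : ℝ) * (2:ℝ) ^ (-(2 * (n:ℝ)))) (((j : ℝ) + 1) * (2:ℝ) ^ (-(2 * (n:ℝ)))),
        ∀ t₂ ∈ Set.Icc ((j : ℝ) * (2:ℝ) ^ (-(2 * (n:ℝ)))) (((j : ℝ) + 1) * (2:ℝ) ^ (-(2 * (n:ℝ)))),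
        ∀ y₁ ∈ Set.Icc ((2:ℝ) ^ (-(n:ℝ))) ((2:ℝ) ^ (-((n:ℝ) - 1))),
        ∀ y₂ ∈ Set.Icc ((2:ℝ) ^ (-(n:ℝ))) ((2:ℝ) ^ (-((n:ℝ) - 1))),
          ‖F t₁ y₁ - F t₂ y₂‖ ≤ c * (2:ℝ) ^ (-(n:ℝ) * δ)) →
      ∃ γ : ℝ → ℂ,
        (∀ t ∈ Set.Icc (0 : ℝ) 1,
          Tendsto (fun y => F t y) (nhdsWithin 0 (Set.Ioi (0 : ℝ))) (nhds (γ t))) ∧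
        ∀ t₁ ∈ Set.Icc (0 : ℝ) 1, ∀ t₂ ∈ Set.Icc (0 : ℝ) 1,
          ‖γ t₁ - γ t₂‖ ≤ c' * |t₁ - t₂| ^ (δ / 2) := by
  refine ⟨c * (2 / (1 - (2:ℝ) ^ (-δ)) + 10), fun F hF => ⟨boundaryValue F, ?_, ?_⟩⟩
  · intro t ht
    exact OscBound.tendsto_boundaryValue hF hδ ht.1
  · intro t₁ ht₁ t₂ ht₂
    refine OscBound.norm_boundaryValue_sub_le hF hδ ht₁.1 ht₂.1 (abs_le.2 ⟨?_, ?_⟩) <;>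
      linarith [ht₁.1, ht₁.2, ht₂.1, ht₂.2]

/-- Chaining over parabolic Whitney boxes: if the oscillation of `F` over every box
`[j2^{-2n}, (j+1)2^{-2n}] × [2^{-n}, 2^{-(n-1)}]` is at most `c 2^{-nδ}`, then the
boundary function `γ(t) = lim_{y→0+} F(t,y)` exists and is Hölder continuous with
exponent `δ/2`, with constant depending only on `c` and `δ`. -/
theorem stmt_16 (c δ : ℝ) (hc : 0 ≤ c) (hδ : 0 < δ) :
    ∃ c' : ℝ, ∀ F : ℝ → ℝ → ℂ,
      (∀ n : ℕ, 1 ≤ n → ∀ j : ℕ,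
        ∀ t₁ ∈ Set.Icc ((j : ℝ) * (2:ℝ) ^ (-(2 * (n:ℝ)))) (((j : ℝ) + 1) * (2:ℝ) ^ (-(2 * (n:ℝ)))),
        ∀ t₂ ∈ Set.Icc ((j : ℝ) * (2:ℝ) ^ (-(2 * (n:ℝ)))) (((j : ℝ) + 1) * (2:ℝ) ^ (-(2 * (n:ℝ)))),
        ∀ y₁ ∈ Set.Icc ((2:ℝ) ^ (-(n:ℝ))) ((2:ℝ) ^ (-((n:ℝ) - 1))),
        ∀ y₂ ∈ Set.Icc ((2:ℝ) ^ (-(n:ℝ))) ((2:ℝ) ^ (-((n:ℝ) - 1))),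
          ‖F t₁ y₁ - F t₂ y₂‖ ≤ c * (2:ℝ) ^ (-(n:ℝ) * δ)) →
      ∃ γ : ℝ → ℂ,
        (∀ t ∈ Set.Icc (0 : ℝ) 1,
          Tendsto (fun y => F t y) (nhdsWithin 0 (Set.Ioi (0 : ℝ))) (nhds (γ t))) ∧
        ∀ t₁ ∈ Set.Icc (0 : ℝ) 1, ∀ t₂ ∈ Set.Icc (0 : ℝ) 1,
          ‖γ t₁ - γ t₂‖ ≤ c' * |t₁ - t₂| ^ (δ / 2) :=
  stmt_16_general c δ hδ
end
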